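/- Let G be a non-abelian group and H a subgroup of G such that cent(G) is finite and |cent(H)| = |cent(G)| = n with n < 6. Then HZ(G) = G, the derived subgroup of H equals the derived subgroup of G, and H/Z(H) ≅ G/Z(G); in particular H and G are isoclinic. -/

import Mathlib

/-- `cent G` is the set of centralizers of elements of `G`, as subgroups of `G`. -/
def cent (G : Type*) [Group G] : Set (Subgroup G) :=
  Set.range fun g : G => Subgroup.centralizer {g}

/-- `nacent G` is the set of non-abelian centralizers of elements of `G`. -/
def nacent (G : Type*) [Group G] : Set (Subgroup G) :=
  {C | C ∈ cent G ∧ ¬ IsMulCommutative C}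

/-!
If `|cent G| ≤ 5` then `G` is a CA-group: a non-abelian `C(x)` would contain non-commuting `u, v`,
and `⊤, C(x), C(u), C(v), C(uv)` together with a centralizer missing `x` make six. In a CA-group
distinct proper centralizers meet in `Z(G)`, so for non-abelian `H` the map `C ↦ C ∩ H` is injective
on `{C(h) | h ∈ H}`, and `|cent H| = |cent G|` says that every centralizer of `G` is some `C(h)`
with `h ∈ H`. Moreover `|C(x)/Z(G)| ≤ |cent G| - 2 ≤ 3` for `x ∉ Z(G)`, so no subgroup lies
strictly between `Z(G)` and `C(x)`. Writing `C(x) = C(h)` with `h ∈ H \ Z(G)`, the subgroup `C(x) ∩ HZ(G)` properly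
contains `Z(G)`, hence equals `C(x)`, and so `HZ(G) = G`. The other two conclusions hold for every
subgroup `H` with `HZ(G) = G`.
-/

open Subgroup

section Centralizers

variable {G : Type*} [Group G] {x y : G}

lemma mem_centralizer_singleton_comm : x ∈ centralizer {y} ↔ y ∈ centralizer {x} := by
  simp only [mem_centralizer_singleton_iff, eq_comm]

lemma mem_centralizer_singleton_self (x : G) : x ∈ centralizer {x} :=
  mem_centralizer_singleton_iff.mpr rfl

lemma centralizer_singleton_eq_top_iff : centralizer {x} = ⊤ ↔ x ∈ center G := by
  simp

lemma top_mem_cent : (⊤ : Subgroup G) ∈ cent G :=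
  ⟨1, centralizer_singleton_eq_top_iff.mpr (one_mem _)⟩

lemma exists_notMem_centralizer_singleton (hx : x ∉ center G) : ∃ y, y ∉ centralizer {x} := by
  simpa [eq_top_iff'] using mt centralizer_singleton_eq_top_iff.mp hx

lemma ncard_cent_eq_one_iff : (cent G).ncard = 1 ↔ center G = ⊤ := by
  rw [Set.ncard_eq_one, eq_top_iff']
  constructor
  · rintro ⟨C, hC⟩ g
    have hg : centralizer {g} ∈ ({C} : Set (Subgroup G)) := hC ▸ ⟨g, rfl⟩
    have htop : ⊤ ∈ ({C} : Set (Subgroup G)) := hC ▸ top_mem_cent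
    exact centralizer_singleton_eq_top_iff.mp (hg.trans htop.symm)
  · intro h
    refine ⟨⊤, Set.eq_singleton_iff_unique_mem.mpr ⟨top_mem_cent, ?_⟩⟩
    rintro _ ⟨g, rfl⟩
    exact centralizer_singleton_eq_top_iff.mpr (h g)

lemma notMem_centralizer_singleton {u v : G} (huv : u * v ≠ v * u) : u ∉ centralizer {v} :=
  fun h => huv (mem_centralizer_singleton_iff.mp h)

lemma left_notMem_centralizer_mul {u v : G} (huv : u * v ≠ v * u) : u ∉ centralizer {u * v} :=
  fun h => huv <| mul_left_cancel (a := u) <| by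
    simpa only [mul_assoc] using mem_centralizer_singleton_iff.mp h

lemma right_notMem_centralizer_mul {u v : G} (huv : u * v ≠ v * u) : v ∉ centralizer {u * v} :=
  fun h => huv <| mul_right_cancel (b := v) <| by
    simpa only [mul_assoc] using (mem_centralizer_singleton_iff.mp h).symm

lemma ncard_centralizer_triple {u v : G} (huv : u * v ≠ v * u) :
    ({centralizer {u}, centralizer {v}, centralizer {u * v}} : Set (Subgroup G)).ncard = 3 := by
  refine Set.ncard_eq_three.mpr ⟨_, _, _, fun h => ?_, fun h => ?_, fun h => ?_, rfl⟩
  · exact notMem_centralizer_singleton huv (h ▸ mem_centralizer_singleton_self u)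
  · exact left_notMem_centralizer_mul huv (h ▸ mem_centralizer_singleton_self u)
  · exact right_notMem_centralizer_mul huv (h ▸ mem_centralizer_singleton_self v)

end Centralizers

def IsCAGroup (G : Type*) [Group G] : Prop :=
  ∀ x ∉ center G, IsMulCommutative (centralizer {x})

section CAGroup

variable {G : Type*} [Group G]

theorem isCAGroup_of_ncard_cent_le_five (hfin : (cent G).Finite) (h5 : (cent G).ncard ≤ 5) :
    IsCAGroup G := by
  intro x hx
  refine isMulCommutative_iff_of_setLike.mpr fun u hu v hv => ?_
  by_contra huv
  set S : Set (Subgroup G) := {centralizer {u}, centralizer {v}, centralizer {u * v}}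
  have hS : ∀ C ∈ S, u ∈ C → v ∉ C := by
    rintro C (rfl | rfl | rfl) hu'
    exacts [notMem_centralizer_singleton (Ne.symm huv), (notMem_centralizer_singleton huv hu').elim,
      (left_notMem_centralizer_mul huv hu').elim]
  have hxS : centralizer {x} ∉ S := fun h => hS _ h hu hv
  have htop : ⊤ ∉ insert (centralizer {x}) S := by
    rintro (h | h)
    exacts [hx (centralizer_singleton_eq_top_iff.mp h.symm), hS _ h (mem_top u) (mem_top v)]
  have hsub : insert ⊤ (insert (centralizer {x}) S) ⊆ {C ∈ cent G | x ∈ C} := by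
    rintro C (rfl | rfl | rfl | rfl | rfl)
    exacts [⟨top_mem_cent, mem_top x⟩, ⟨⟨x, rfl⟩, mem_centralizer_singleton_self x⟩,
      ⟨⟨u, rfl⟩, mem_centralizer_singleton_comm.mp hu⟩,
      ⟨⟨v, rfl⟩, mem_centralizer_singleton_comm.mp hv⟩,
      ⟨⟨u * v, rfl⟩, mem_centralizer_singleton_comm.mp (mul_mem hu hv)⟩]
  have hlt : {C ∈ cent G | x ∈ C} ⊂ cent G := by
    obtain ⟨g, hg⟩ := exists_notMem_centralizer_singleton hx
    exact (Set.ssubset_iff_of_subset (Set.sep_subset _ _)).mpr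
      ⟨_, ⟨g, rfl⟩, fun h => hg (mem_centralizer_singleton_comm.mp h.2)⟩
  have := Set.ncard_le_ncard hsub (hfin.subset (Set.sep_subset _ _))
  have := Set.ncard_lt_ncard hlt hfin
  rw [Set.ncard_insert_of_notMem htop, Set.ncard_insert_of_notMem hxS,
    ncard_centralizer_triple huv] at *
  omega

end CAGroup

namespace IsCAGroup

variable {G : Type*} [Group G] (hG : IsCAGroup G) {x y u : G}
include hG

lemma mul_comm (hx : x ∉ center G) {a b : G} (ha : a ∈ centralizer {x})
    (hb : b ∈ centralizer {x}) : a * b = b * a :=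
  have := hG x hx; setLike_mul_comm ha hb

lemma centralizer_eq_of_mem (hx : x ∉ center G) (hu : u ∉ center G)
    (hux : u ∈ centralizer {x}) : centralizer {u} = centralizer {x} := by
  have hxu : x ∈ centralizer {u} := mem_centralizer_singleton_comm.mp hux
  refine le_antisymm (fun t ht => ?_) (fun t ht => ?_) <;>
    rw [mem_centralizer_singleton_iff]
  · exact hG.mul_comm hu ht hxu
  · exact hG.mul_comm hx ht hux

lemma centralizer_eq_of_mem_of_mem (hx : x ∉ center G) (hy : y ∉ center G) (hu : u ∉ center G)
    (hux : u ∈ centralizer {x}) (huy : u ∈ centralizer {y}) :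
    centralizer {x} = centralizer {y} := by
  rw [← hG.centralizer_eq_of_mem hx hu hux, hG.centralizer_eq_of_mem hy hu huy]

/-- For `y ∉ C(x)`, the map `a ↦ C(y a)` embeds `C(x) / Z(G)` into the remaining centralizers. -/
lemma nonempty_embedding_quotient_center (hx : x ∉ center G) :
    Nonempty (centralizer {x} ⧸ (center G).subgroupOf (centralizer {x}) ↪
      ↥(cent G \ {⊤, centralizer {x}})) := by
  obtain ⟨y, hy⟩ := exists_notMem_centralizer_singleton hx
  have hya : ∀ a ∈ centralizer {x}, y * a ∉ centralizer {x} := fun a ha h =>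
    hy (by simpa using mul_mem h (inv_mem ha))
  have hyaZ : ∀ a ∈ centralizer {x}, y * a ∉ center G := fun a ha h =>
    hya a ha (center_le_centralizer _ h)
  refine ⟨⟨fun q => ⟨centralizer {y * q.out}, ⟨_, rfl⟩, ?_⟩, fun q r hqr => ?_⟩⟩
  · rintro (h | h)
    · exact hyaZ _ q.out.2 (centralizer_singleton_eq_top_iff.mp h)
    · exact hya _ q.out.2 (h.le (mem_centralizer_singleton_self _))
  · set a : G := ↑q.out
    set b : G := ↑r.out
    replace hqr : centralizer {y * a} = centralizer {y * b} := congrArg Subtype.val hqr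
    rw [← q.out_eq', ← r.out_eq', QuotientGroup.eq, mem_subgroupOf]
    by_contra hab
    have hab' : a⁻¹ * b ∈ centralizer {y * a} := by
      have hb : y * b ∈ centralizer {y * a} := hqr ▸ mem_centralizer_singleton_self (y * b)
      simpa [mul_assoc] using mul_mem (inv_mem (mem_centralizer_singleton_self (y * a))) hb
    have := hG.centralizer_eq_of_mem_of_mem (hyaZ a q.out.2) hx hab hab'
      (mul_mem (inv_mem q.out.2) r.out.2)
    exact hya a q.out.2 (this.le (mem_centralizer_singleton_self _))

lemma relIndex_center_centralizer_ne_zero_and_le (hfin : (cent G).Finite) (hx : x ∉ center G) :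
    (center G).relIndex (centralizer {x}) ≠ 0 ∧
      (center G).relIndex (centralizer {x}) ≤ (cent G).ncard - 2 := by
  obtain ⟨e⟩ := hG.nonempty_embedding_quotient_center hx
  have : Finite ↥(cent G \ {⊤, centralizer {x}}) := hfin.sdiff.to_subtype
  have : Finite (centralizer {x} ⧸ (center G).subgroupOf (centralizer {x})) :=
    Finite.of_injective e e.injective
  have hpair : ({⊤, centralizer {x}} : Set (Subgroup G)) ⊆ cent G :=
    Set.insert_subset top_mem_cent (Set.singleton_subset_iff.mpr ⟨x, rfl⟩)
  have htop : (⊤ : Subgroup G) ≠ centralizer {x} :=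
    fun h => hx (centralizer_singleton_eq_top_iff.mp h.symm)
  refine ⟨Nat.card_pos.ne', ?_⟩
  calc (center G).relIndex (centralizer {x})
      ≤ Nat.card ↥(cent G \ {⊤, centralizer {x}}) := Nat.card_le_card_of_injective e e.injective
    _ = (cent G).ncard - 2 := by
      rw [Nat.card_coe_set_eq, Set.ncard_sdiff hpair, Set.ncard_pair htop]

lemma centralizer_le_of_center_lt_of_le (hfin : (cent G).Finite) (h5 : (cent G).ncard ≤ 5)
    (hx : x ∉ center G) {D : Subgroup G} (hZD : center G < D) (hDx : D ≤ centralizer {x}) :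
    centralizer {x} ≤ D := by
  obtain ⟨hne, hle⟩ := hG.relIndex_center_centralizer_ne_zero_and_le hfin hx
  rw [← relIndex_mul_relIndex _ _ _ hZD.le hDx] at hne hle
  have h1 : (center G).relIndex D ≠ 1 := mt relIndex_eq_one.mp hZD.not_ge
  have h0 : (center G).relIndex D ≠ 0 := left_ne_zero_of_mul hne
  rw [← relIndex_eq_one]
  by_contra hne1
  have : 2 ≤ D.relIndex (centralizer {x}) := by have := right_ne_zero_of_mul hne; omega
  have : 2 * 2 ≤ (center G).relIndex D * D.relIndex (centralizer {x}) :=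
    Nat.mul_le_mul (by omega) this
  omega

end IsCAGroup

section Subgroup

variable {G : Type*} [Group G] (H : Subgroup G)

lemma centralizer_singleton_subgroupOf (h : H) :
    centralizer {h} = (centralizer {(h : G)}).subgroupOf H := by
  ext g
  simp [mem_subgroupOf, mem_centralizer_singleton_iff, Subtype.ext_iff]

lemma cent_subgroup_eq_image :
    cent H = (·.subgroupOf H) '' Set.range fun h : H => centralizer {(h : G)} := by
  rw [← Set.range_comp]
  exact congrArg Set.range (funext (centralizer_singleton_subgroupOf H))

namespace IsCAGroup

variable {H} (hG : IsCAGroup G) (hH : center H ≠ ⊤)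
include hG hH

lemma mem_center_of_le_centralizer {b : G} (hb : H ≤ centralizer {b}) : b ∈ center G := by
  by_contra hbZ
  refine hH ((eq_top_iff' _).mpr fun a => mem_center_iff.mpr fun c => ?_)
  exact Subtype.ext (hG.mul_comm hbZ (hb c.2) (hb a.2))

lemma injOn_subgroupOf :
    Set.InjOn (·.subgroupOf H) (Set.range fun h : H => centralizer {(h : G)}) := by
  have hcenter : ∀ a b : H, (a : G) ∈ center G →
      (centralizer {(a : G)}).subgroupOf H = (centralizer {(b : G)}).subgroupOf H →
      (b : G) ∈ center G := by
    intro a b ha hab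
    refine hG.mem_center_of_le_centralizer hH ?_
    rw [← subgroupOf_eq_top, ← hab, centralizer_singleton_eq_top_iff.mpr ha, top_subgroupOf]
  rintro _ ⟨a, rfl⟩ _ ⟨b, rfl⟩
    (hab : (centralizer {(a : G)}).subgroupOf H = (centralizer {(b : G)}).subgroupOf H)
  show centralizer {(a : G)} = centralizer {(b : G)}
  by_cases ha : (a : G) ∈ center G
  · rw [centralizer_singleton_eq_top_iff.mpr ha,
      centralizer_singleton_eq_top_iff.mpr (hcenter a b ha hab)]
  · have hb : (b : G) ∉ center G := fun hb => ha (hcenter b a hb hab.symm)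
    have hab' : a ∈ (centralizer {(b : G)}).subgroupOf H :=
      hab ▸ mem_subgroupOf.mpr (mem_centralizer_singleton_self _)
    exact hG.centralizer_eq_of_mem hb ha (mem_subgroupOf.mp hab')

lemma range_centralizer_eq_cent (hfin : (cent G).Finite)
    (hcard : (cent H).ncard = (cent G).ncard) :
    Set.range (fun h : H => centralizer {(h : G)}) = cent G := by
  refine Set.eq_of_subset_of_ncard_le (Set.range_subset_iff.mpr fun h => ⟨h, rfl⟩) ?_ hfin
  rw [← hcard, cent_subgroup_eq_image, (hG.injOn_subgroupOf hH).ncard_image]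

end IsCAGroup

theorem sup_center_eq_top_of_ncard_cent_eq (hfin : (cent G).Finite) (h5 : (cent G).ncard ≤ 5)
    (hcard : (cent H).ncard = (cent G).ncard) : H ⊔ center G = ⊤ := by
  by_cases hH : center H = ⊤
  · rw [ncard_cent_eq_one_iff.mp (hcard ▸ ncard_cent_eq_one_iff.mpr hH), sup_top_eq]
  have hG := isCAGroup_of_ncard_cent_le_five hfin h5
  refine (eq_top_iff' _).mpr fun g => ?_
  by_cases hg : g ∈ center G
  · exact mem_sup_right hg
  obtain ⟨h, hh⟩ : centralizer {g} ∈ Set.range fun h : H => centralizer {(h : G)} := by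
    rw [hG.range_centralizer_eq_cent hH hfin hcard]
    exact ⟨g, rfl⟩
  have hhg : (h : G) ∈ centralizer {g} := hh ▸ mem_centralizer_singleton_self _
  have hhZ : (h : G) ∉ center G := fun hZ =>
    hg (centralizer_singleton_eq_top_iff.mp (hh ▸ centralizer_singleton_eq_top_iff.mpr hZ))
  have hZD : center G < centralizer {g} ⊓ (H ⊔ center G) :=
    (le_inf (center_le_centralizer _) le_sup_right).lt_of_not_ge
      fun hD => hhZ (hD ⟨hhg, mem_sup_left h.2⟩)
  have hle := hG.centralizer_le_of_center_lt_of_le hfin h5 hg hZD inf_le_left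
  exact (hle (mem_centralizer_singleton_self g)).2

end Subgroup

section SupCenter

variable {G : Type*} [Group G] {H : Subgroup G}

open scoped commutatorElement in
lemma commutatorElement_mul_mul_of_mem_center {a b z w : G} (hz : z ∈ center G)
    (hw : w ∈ center G) : ⁅a * z, b * w⁆ = ⁅a, b⁆ := by
  have hz' (c : G) : ⁅z, c⁆ = 1 := Commute.commutator_eq (mem_center_iff.mp hz c).symm
  have hw' (c : G) : ⁅c, w⁆ = 1 := Commute.commutator_eq (mem_center_iff.mp hw c)
  simp [commutatorElement_mul_left_eq_conj_mul, commutatorElement_mul_right_eq_mul_conj, hz', hw']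

open scoped commutatorElement in
lemma commutator_eq_of_sup_center_eq_top (h : H ⊔ center G = ⊤) : ⁅H, H⁆ = commutator G := by
  refine le_antisymm (commutator_mono le_top le_top) (commutator_le.mpr fun g _ g' _ => ?_)
  obtain ⟨a, ha, z, hz, rfl⟩ := mem_sup_of_normal_right.mp (h ▸ mem_top g)
  obtain ⟨b, hb, w, hw, rfl⟩ := mem_sup_of_normal_right.mp (h ▸ mem_top g')
  rw [commutatorElement_mul_mul_of_mem_center hz hw]
  exact commutator_mem_commutator ha hb

lemma center_eq_subgroupOf_of_sup_center_eq_top (h : H ⊔ center G = ⊤) :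
    center H = (center G).subgroupOf H := by
  ext a
  rw [mem_subgroupOf]
  refine ⟨fun ha => ?_, fun ha => mem_center_iff.mpr fun c => Subtype.ext (mem_center_iff.mp ha c)⟩
  rw [← centralizer_singleton_eq_top_iff, eq_top_iff, ← h]
  refine sup_le (fun c hc => ?_) (center_le_centralizer _)
  exact mem_centralizer_singleton_iff.mpr (congrArg Subtype.val (mem_center_iff.mp ha ⟨c, hc⟩))

lemma surjective_mk_comp_subtype_of_sup_center_eq_top (h : H ⊔ center G = ⊤) :
    Function.Surjective ((QuotientGroup.mk' (center G)).comp H.subtype) := by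
  intro q
  obtain ⟨g, rfl⟩ := QuotientGroup.mk_surjective q
  obtain ⟨a, ha, z, hz, rfl⟩ := mem_sup_of_normal_right.mp (h ▸ mem_top g)
  exact ⟨⟨a, ha⟩, QuotientGroup.eq.mpr (by simpa using hz)⟩

noncomputable def quotientCenterMulEquivOfSupCenterEqTop (h : H ⊔ center G = ⊤) :
    H ⧸ center H ≃* G ⧸ center G :=
  (QuotientGroup.quotientMulEquivOfEq (by
    rw [center_eq_subgroupOf_of_sup_center_eq_top h, ← MonoidHom.comap_ker, QuotientGroup.ker_mk']
    rfl)).trans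
  (QuotientGroup.quotientKerEquivOfSurjective _ (surjective_mk_comp_subtype_of_sup_center_eq_top h))

end SupCenter

theorem isoclinic_of_same_cent_card_lt_six_general (G : Type*) [Group G]
    (hfin : (cent G).Finite) (H : Subgroup G) (n : ℕ) (hn : n < 6)
    (hH : (cent H).ncard = n) (hGn : (cent G).ncard = n) :
    H ⊔ Subgroup.center G = ⊤ ∧ ⁅H, H⁆ = commutator G ∧
      Nonempty ((H ⧸ Subgroup.center H) ≃* (G ⧸ Subgroup.center G)) := by
  have hsup := sup_center_eq_top_of_ncard_cent_eq H hfin (by omega) (hH.trans hGn.symm)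
  exact ⟨hsup, commutator_eq_of_sup_center_eq_top hsup,
    ⟨quotientCenterMulEquivOfSupCenterEqTop hsup⟩⟩

theorem isoclinic_of_same_cent_card_lt_six (G : Type*) [Group G]
    (hG : ¬ ∀ a b : G, a * b = b * a)
    (hfin : (cent G).Finite) (H : Subgroup G) (n : ℕ) (hn : n < 6)
    (hH : (cent H).ncard = n) (hGn : (cent G).ncard = n) :
    H ⊔ Subgroup.center G = ⊤ ∧ ⁅H, H⁆ = commutator G ∧
      Nonempty ((H ⧸ Subgroup.center H) ≃* (G ⧸ Subgroup.center G)) :=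
  isoclinic_of_same_cent_card_lt_six_general G hfin H n hn hH hGn
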